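/- (Global existence and uniqueness, Theorem 1, global part.) Let n ≥ 1 and T > 0. Let α_0, α_1, …, α_n : [0,T] → ℝ with α_0(t) = 0 and α_n(t) = t for all t, each α_i continuously differentiable, α_i(0) = 0, and 0 = α_0(t) < α_1(t) < ⋯ < α_{n-1}(t) < α_n(t) = t for all t ∈ (0,T]. Let K_1, …, K_n : [0,T] × [0,T] → ℝ be continuous and have continuous partial derivatives with respect to the first variable t, let f : [0,T] → ℝ be continuously differentiable with f(0) = 0, and suppose K_n(t,t) ≠ 0 for all t ∈ [0,T] and D(0) < 1. Let τ ∈ (0,T] be as in the local existence theorem, and suppose in addition that min_{τ ≤ t ≤ T} (t − α_{n-1}(t)) = h > 0. Then there is exactly one continuous function x : [0,T] → ℝ satisfying Σ_{i=1}^{n} ∫_{α_{i-1}(t)}^{α_i(t)} K_i(t,s) x(s) ds = f(t) for every t ∈ [0,T]. -/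

import Mathlib

/-!
Differentiating the equation (Leibniz rule) turns it into an equation of the second kind,
`x = secondKindOp x`: since the kernel jumps across the curves `α i`, the derivative contains,
besides `K n t t * x t` and integrals of `K' i * x` over `[0, t]`, the delayed values `x (α i t)`,
`i < n`, weighted by the jumps. For `t ≥ τ` these delays are at least `h`, so in the Bielecki norm
`sup_t e^{-L t} |x t|` with `L` large the second-kind operator is a contraction on the continuous
functions on `[0, T]` extending the local solution. Its fixed point solves the equation, because
both sides agree at `τ` and have the same derivative after `τ`, and every solution is such a fixed
point.
-/

open Set Filter Topology MeasureTheory Function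

theorem hasDerivAt_integral_param {G G' : ℝ → ℝ → ℝ} (hG : Continuous (uncurry G))
    (hG' : Continuous (uncurry G')) {t₀ : ℝ}
    (hGt : ∀ᶠ t in 𝓝 t₀, ∀ s, HasDerivAt (G · s) (G' t s) t) (a b : ℝ) :
    HasDerivAt (fun t => ∫ s in a..b, G t s) (∫ s in a..b, G' t₀ s) t₀ := by
  obtain ⟨M, hM⟩ := ((isCompact_closedBall t₀ 1).prod (isCompact_uIcc (a := a) (b := b))
    ).exists_bound_of_continuousOn hG'.continuousOn
  exact (intervalIntegral.hasDerivAt_integral_of_dominated_loc_of_deriv_le (bound := fun _ => M)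
    (inter_mem hGt (Metric.closedBall_mem_nhds t₀ one_pos))
    (Eventually.of_forall fun t => (hG.comp (Continuous.prodMk_right t)).aestronglyMeasurable)
    ((hG.comp (Continuous.prodMk_right t₀)).intervalIntegrable _ _)
    (hG'.comp (Continuous.prodMk_right t₀)).aestronglyMeasurable
    (Eventually.of_forall fun s hs t ht => hM (t, s) ⟨ht.2, uIoc_subset_uIcc hs⟩)
    intervalIntegrable_const (Eventually.of_forall fun s _ t ht => ht.1 s)).2

theorem hasDerivAt_integral_param_upper {G G' : ℝ → ℝ → ℝ} (hG : Continuous (uncurry G))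
    (hG' : Continuous (uncurry G')) {t₀ : ℝ}
    (hGt : ∀ᶠ t in 𝓝 t₀, ∀ s, HasDerivAt (G · s) (G' t s) t) (a : ℝ) {b : ℝ → ℝ} {b' : ℝ}
    (hb : HasDerivAt b b' t₀) :
    HasDerivAt (fun t => ∫ s in a..b t, G t s)
      ((∫ s in a..b t₀, G' t₀ s) + b' * G t₀ (b t₀)) t₀ := by
  -- the two partial derivatives of `(t, u) ↦ ∫ s in a..u, G t s` are continuous
  have hΦ := hasStrictFDerivAt_uncurry_coprod (u := (t₀, b t₀))
    (f := fun t u => ∫ s in a..u, G t s)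
    (f₁ := fun t u => (1 : ℝ →L[ℝ] ℝ).smulRight (∫ s in a..u, G' t s))
    (f₂ := fun t u => (1 : ℝ →L[ℝ] ℝ).smulRight (G t u)) ?_ ?_ ?_ ?_
  · refine (hΦ.hasFDerivAt.comp_hasDerivAt t₀ ((hasDerivAt_id t₀).prodMk hb)).congr_deriv ?_
    simp [HasUncurry.uncurry]
  · filter_upwards [(continuous_fst.tendsto (t₀, b t₀)).eventually hGt.eventually_nhds] with v hv
    exact (hasDerivAt_integral_param hG hG' hv a v.2).hasFDerivAt
  · exact Eventually.of_forall fun v => ((hG.comp (Continuous.prodMk_right v.1)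
      ).integral_hasStrictDerivAt a v.2).hasDerivAt.hasFDerivAt
  · have := intervalIntegral.continuous_parametric_primitive_of_continuous (a₀ := a)
      (μ := volume) hG'
    exact Continuous.continuousAt (by fun_prop)
  · exact Continuous.continuousAt (by fun_prop)

theorem hasDerivAt_integral_param_limits {G G' : ℝ → ℝ → ℝ} (hG : Continuous (uncurry G))
    (hG' : Continuous (uncurry G')) {t₀ : ℝ}
    (hGt : ∀ᶠ t in 𝓝 t₀, ∀ s, HasDerivAt (G · s) (G' t s) t) {a b : ℝ → ℝ} {a' b' : ℝ}
    (ha : HasDerivAt a a' t₀) (hb : HasDerivAt b b' t₀) :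
    HasDerivAt (fun t => ∫ s in a t..b t, G t s)
      ((∫ s in a t₀..b t₀, G' t₀ s) + b' * G t₀ (b t₀) - a' * G t₀ (a t₀)) t₀ := by
  have hint : ∀ (F : ℝ → ℝ → ℝ), Continuous (uncurry F) → ∀ t u v,
      IntervalIntegrable (F t) volume u v :=
    fun F hF t u v => (hF.comp (Continuous.prodMk_right t)).intervalIntegrable u v
  have h := (hasDerivAt_integral_param_upper hG hG' hGt 0 hb).sub
    (hasDerivAt_integral_param_upper hG hG' hGt 0 ha)
  refine (h.congr_deriv ?_).congr_of_eventuallyEq (Eventually.of_forall fun t => ?_)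
  · rw [← intervalIntegral.integral_interval_sub_left (hint G' hG' t₀ 0 (b t₀))
      (hint G' hG' t₀ 0 (a t₀))]
    ring
  · exact (intervalIntegral.integral_interval_sub_left (hint G hG t 0 _) (hint G hG t 0 _)).symm

theorem continuous_integral_param_limits {G : ℝ → ℝ → ℝ} (hG : Continuous (uncurry G))
    {a b : ℝ → ℝ} (ha : Continuous a) (hb : Continuous b) :
    Continuous fun t => ∫ s in a t..b t, G t s := by
  have hprim {c : ℝ → ℝ} (hc : Continuous c) : Continuous fun t => ∫ s in (0 : ℝ)..c t, G t s :=
    intervalIntegral.continuous_parametric_intervalIntegral_of_continuous hG hc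
  refine ((hprim hb).sub (hprim ha)).congr fun t => ?_
  exact intervalIntegral.integral_interval_sub_left
    ((hG.comp (Continuous.prodMk_right t)).intervalIntegrable _ _)
    ((hG.comp (Continuous.prodMk_right t)).intervalIntegrable _ _)

theorem continuous_comp_projIcc {a b : ℝ} (h : a ≤ b) {f : ℝ → ℝ}
    (hf : ContinuousOn f (Icc a b)) : Continuous fun t => f (projIcc a b h t) :=
  hf.comp_continuous (continuous_subtype_val.comp continuous_projIcc) fun t => (projIcc a b h t).2

theorem continuous_uncurry_comp_projIcc {a b : ℝ} (h : a ≤ b) {F : ℝ → ℝ → ℝ}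
    (hF : ContinuousOn (uncurry F) (Icc a b ×ˢ Icc a b)) :
    Continuous (uncurry fun t s => F (projIcc a b h t) (projIcc a b h s)) :=
  hF.comp_continuous (f := fun p : ℝ × ℝ => ((projIcc a b h p.1 : ℝ), (projIcc a b h p.2 : ℝ)))
    (by fun_prop) fun p => ⟨(projIcc a b h p.1).2, (projIcc a b h p.2).2⟩

theorem HasDerivAt.comp_projIcc {a b : ℝ} (h : a ≤ b) {f : ℝ → ℝ} {f' t : ℝ}
    (hf : HasDerivAt f f' t) (ht : t ∈ Ioo a b) :
    HasDerivAt (fun u => f (projIcc a b h u)) f' t := by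
  refine hf.congr_of_eventuallyEq ?_
  filter_upwards [Ioo_mem_nhds ht.1 ht.2] with u hu
  simp [projIcc_of_mem h (Ioo_subset_Icc_self hu)]

theorem integral_comp_projIcc {a b : ℝ} (h : a ≤ b) (f : ℝ → ℝ) {u v : ℝ} (hu : u ∈ Icc a b)
    (hv : v ∈ Icc a b) : ∫ s in u..v, f (projIcc a b h s) = ∫ s in u..v, f s :=
  intervalIntegral.integral_congr fun s hs => by simp [projIcc_of_mem h (uIcc_subset_Icc hu hv hs)]

theorem continuousOn_integral_param_limits {a b : ℝ} (h : a ≤ b) {G : ℝ → ℝ → ℝ}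
    (hG : ContinuousOn (uncurry G) (Icc a b ×ˢ Icc a b)) {u v : ℝ → ℝ}
    (hu : ContinuousOn u (Icc a b)) (hv : ContinuousOn v (Icc a b))
    (huv : ∀ t ∈ Icc a b, u t ∈ Icc a b ∧ v t ∈ Icc a b) :
    ContinuousOn (fun t => ∫ s in u t..v t, G t s) (Icc a b) := by
  refine (continuous_integral_param_limits (continuous_uncurry_comp_projIcc h hG)
    (continuous_comp_projIcc h hu) (continuous_comp_projIcc h hv)).continuousOn.congr
    fun t ht => ?_
  have hπ : (projIcc a b h t : ℝ) = t := by simp [projIcc_of_mem h ht]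
  simp only [hπ]
  exact (integral_comp_projIcc h (G t) (huv t ht).1 (huv t ht).2).symm

theorem hasDerivAt_integral_param_limits_of_continuousOn {a b : ℝ} {G G' : ℝ → ℝ → ℝ}
    (hG : ContinuousOn (uncurry G) (Icc a b ×ˢ Icc a b))
    (hG' : ContinuousOn (uncurry G') (Icc a b ×ˢ Icc a b))
    (hGt : ∀ s ∈ Icc a b, ∀ t ∈ Icc a b, HasDerivAt (G · s) (G' t s) t) {u v : ℝ → ℝ}
    (huv : ∀ t ∈ Icc a b, u t ∈ Icc a b ∧ v t ∈ Icc a b) {t₀ u' v' : ℝ} (ht₀ : t₀ ∈ Ioo a b)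
    (hu : HasDerivAt u u' t₀) (hv : HasDerivAt v v' t₀) :
    HasDerivAt (fun t => ∫ s in u t..v t, G t s)
      ((∫ s in u t₀..v t₀, G' t₀ s) + v' * G t₀ (v t₀) - u' * G t₀ (u t₀)) t₀ := by
  have h : a ≤ b := (ht₀.1.trans ht₀.2).le
  have hπ {t : ℝ} (ht : t ∈ Icc a b) : (projIcc a b h t : ℝ) = t := by simp [projIcc_of_mem h ht]
  have ht₀' := Ioo_subset_Icc_self ht₀
  have hderiv := hasDerivAt_integral_param_limits (continuous_uncurry_comp_projIcc h hG)
    (continuous_uncurry_comp_projIcc h hG') ?_ (hu.comp_projIcc h ht₀) (hv.comp_projIcc h ht₀)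
  · refine (hderiv.congr_of_eventuallyEq ?_).congr_deriv ?_
    · filter_upwards [Icc_mem_nhds ht₀.1 ht₀.2] with t ht
      simp only [hπ ht]
      exact (integral_comp_projIcc h (G t) (huv t ht).1 (huv t ht).2).symm
    · simp only [hπ ht₀', hπ (huv t₀ ht₀').1, hπ (huv t₀ ht₀').2,
        integral_comp_projIcc h (G' t₀) (huv t₀ ht₀').1 (huv t₀ ht₀').2]
  · filter_upwards [Ioo_mem_nhds ht₀.1 ht₀.2] with t ht s
    rw [hπ (Ioo_subset_Icc_self ht)]
    exact (hGt _ (projIcc a b h s).2 t (Ioo_subset_Icc_self ht)).comp_projIcc h ht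

section ExpWeighted

variable {T : ℝ} (hT : 0 ≤ T) (L : ℝ)

/-- Under `u ↦ expWeightedExtend hT L u` the sup distance on `C([0,T], ℝ)` becomes the Bielecki
distance `sup_t e^{-L t} |x t - y t|`. -/
noncomputable def expWeightedExtend (u : C(Icc 0 T, ℝ)) (t : ℝ) : ℝ :=
  Real.exp (L * t) * IccExtend hT u t

noncomputable def expWeightedRestrict {x : ℝ → ℝ} (hx : ContinuousOn x (Icc 0 T)) : C(Icc 0 T, ℝ) :=
  ⟨fun p => Real.exp (-(L * p)) * x p,
    (by fun_prop : Continuous fun p : Icc 0 T => Real.exp (-(L * p))).mul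
      hx.domRestrict⟩

variable {hT L}

theorem continuous_expWeightedExtend (u : C(Icc 0 T, ℝ)) :
    Continuous (expWeightedExtend hT L u) :=
  (by fun_prop : Continuous fun t => Real.exp (L * t)).mul u.continuous.Icc_extend'

theorem expWeightedExtend_of_mem (u : C(Icc 0 T, ℝ)) {t : ℝ} (ht : t ∈ Icc 0 T) :
    expWeightedExtend hT L u t = Real.exp (L * t) * u ⟨t, ht⟩ := by
  simp [expWeightedExtend, IccExtend_of_mem _ _ ht]

theorem expWeightedExtend_restrict {x : ℝ → ℝ} (hx : ContinuousOn x (Icc 0 T)) :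
    EqOn (expWeightedExtend hT L (expWeightedRestrict L hx)) x (Icc 0 T) := fun t ht => by
  rw [expWeightedExtend_of_mem _ ht]
  simp [expWeightedRestrict, ← mul_assoc, ← Real.exp_add]

theorem abs_expWeightedExtend_sub_le (u v : C(Icc 0 T, ℝ)) {t : ℝ} (ht : t ∈ Icc 0 T) :
    |expWeightedExtend hT L u t - expWeightedExtend hT L v t| ≤ dist u v * Real.exp (L * t) := by
  rw [expWeightedExtend_of_mem _ ht, expWeightedExtend_of_mem _ ht, ← mul_sub, abs_mul,
    Real.abs_exp, mul_comm]
  rw [← Real.dist_eq]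
  exact mul_le_mul_of_nonneg_right (ContinuousMap.dist_apply_le_dist _) (Real.exp_pos _).le

theorem dist_expWeightedRestrict_le {x y : ℝ → ℝ} (hx : ContinuousOn x (Icc 0 T))
    (hy : ContinuousOn y (Icc 0 T)) {c : ℝ} (hc : 0 ≤ c)
    (hxy : ∀ t ∈ Icc 0 T, |x t - y t| ≤ c * Real.exp (L * t)) :
    dist (expWeightedRestrict L hx) (expWeightedRestrict L hy) ≤ c := by
  refine (ContinuousMap.dist_le hc).2 fun p => ?_
  rw [Real.dist_eq]
  simp only [expWeightedRestrict, ContinuousMap.coe_mk, ← mul_sub, abs_mul, Real.abs_exp]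
  calc Real.exp (-(L * p)) * |x p - y p| ≤ Real.exp (-(L * p)) * (c * Real.exp (L * p)) :=
        mul_le_mul_of_nonneg_left (hxy p p.2) (Real.exp_pos _).le
    _ = c := by rw [mul_left_comm, ← Real.exp_add, neg_add_cancel, Real.exp_zero, mul_one]

theorem isClosed_setOf_eqOn_expWeightedExtend (x₀ : ℝ → ℝ) (s : Set ℝ) :
    IsClosed {u : C(Icc 0 T, ℝ) | EqOn (expWeightedExtend hT L u) x₀ s} := by
  simp only [EqOn, ofPred_forall]
  exact isClosed_biInter fun t _ => isClosed_eq
    (continuous_const.mul (continuous_eval_const (projIcc 0 T hT t))) continuous_const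

/-- Banach's fixed point theorem for the Bielecki norm `sup_t e^{-L t} |x t|`. -/
theorem exists_unique_eqOn_of_expWeighted_contraction {τ q : ℝ} (hτ : 0 ≤ τ) (hτT : τ ≤ T)
    (hq0 : 0 ≤ q) (hq : q < 1) {x₀ : ℝ → ℝ} (hx₀ : ContinuousOn x₀ (Icc 0 T))
    {Φ : (ℝ → ℝ) → ℝ → ℝ}
    (hΦ : ∀ x, ContinuousOn x (Icc 0 T) → EqOn x x₀ (Icc 0 τ) →
      ContinuousOn (Φ x) (Icc 0 T) ∧ EqOn (Φ x) x₀ (Icc 0 τ))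
    (hlip : ∀ x y, ContinuousOn x (Icc 0 T) → ContinuousOn y (Icc 0 T) → ∀ d, 0 ≤ d →
      (∀ s ∈ Icc 0 T, |x s - y s| ≤ d * Real.exp (L * s)) →
      ∀ t ∈ Icc 0 T, |Φ x t - Φ y t| ≤ q * d * Real.exp (L * t)) :
    ∃ x, ContinuousOn x (Icc 0 T) ∧ EqOn x x₀ (Icc 0 τ) ∧ EqOn x (Φ x) (Icc 0 T) ∧
      ∀ y, ContinuousOn y (Icc 0 T) → EqOn y x₀ (Icc 0 τ) → EqOn y (Φ y) (Icc 0 T) →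
        EqOn y x (Icc 0 T) := by
  have hT : 0 ≤ T := hτ.trans hτT
  have hτT' : Icc 0 τ ⊆ Icc 0 T := Icc_subset_Icc_right hτT
  set E := expWeightedExtend hT L
  have hE (u : C(Icc 0 T, ℝ)) : ContinuousOn (E u) (Icc 0 T) :=
    (continuous_expWeightedExtend u).continuousOn
  have hER {x : ℝ → ℝ} (hx : ContinuousOn x (Icc 0 T)) :
      EqOn (E (expWeightedRestrict L hx)) x (Icc 0 T) :=
    expWeightedExtend_restrict hx
  set S : Set C(Icc 0 T, ℝ) := {u | EqOn (E u) x₀ (Icc 0 τ)}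
  let Ψ : S → S := fun u => ⟨expWeightedRestrict L (hΦ _ (hE u) u.2).1, fun t ht =>
    (hER _ (hτT' ht)).trans ((hΦ _ (hE u) u.2).2 ht)⟩
  have hΨ : ContractingWith ⟨q, hq0⟩ Ψ := by
    refine ⟨hq, LipschitzWith.of_dist_le_mul fun u v => ?_⟩
    rw [Subtype.dist_eq, Subtype.dist_eq]
    exact dist_expWeightedRestrict_le (hΦ _ (hE u) u.2).1 (hΦ _ (hE v) v.2).1
      (mul_nonneg hq0 dist_nonneg) fun t ht => hlip _ _ (hE u) (hE v) _ dist_nonneg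
        (fun s hs => abs_expWeightedExtend_sub_le _ _ hs) t ht
  have : Nonempty S := ⟨⟨expWeightedRestrict L hx₀, (hER hx₀).mono hτT'⟩⟩
  have : CompleteSpace S := (isClosed_setOf_eqOn_expWeightedExtend x₀ _).completeSpace_coe
  set u := ContractingWith.fixedPoint Ψ hΨ
  have hfix : EqOn (E u) (Φ (E u)) (Icc 0 T) := fun t ht => by
    rw [← hER (hΦ _ (hE u) u.2).1 ht]
    exact congrArg (fun v : S => E v t) hΨ.fixedPoint_isFixedPt.symm
  refine ⟨E u, hE u, u.2, hfix, fun y hy hy₀ hyΦ => ?_⟩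
  have hyS : expWeightedRestrict L hy ∈ S := ((hER hy).mono hτT').trans hy₀
  -- `Φ` only sees values on `[0,T]`: the Lipschitz bound with `d = 0`
  have hΦy : EqOn (Φ (E (expWeightedRestrict L hy))) (Φ y) (Icc 0 T) := fun t ht => by
    have := hlip _ _ (hE (expWeightedRestrict L hy)) hy 0 le_rfl
      (fun s hs => by rw [hER hy hs, sub_self, abs_zero]; positivity) t ht
    simpa [sub_eq_zero] using this
  have hfixy : Ψ ⟨_, hyS⟩ = ⟨_, hyS⟩ := Subtype.ext <| ContinuousMap.ext fun p => by
    show Real.exp (-(L * p)) * Φ (E (expWeightedRestrict L hy)) p = Real.exp (-(L * p)) * y p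
    rw [hΦy p.2, ← hyΦ p.2]
  have hyu : (⟨_, hyS⟩ : S) = u := hΨ.fixedPoint_unique hfixy
  intro t ht
  rw [← hER hy ht]
  exact congrArg (fun w : S => E w t) hyu

end ExpWeighted

theorem ContinuousOn.ite_le {f g : ℝ → ℝ} {s : Set ℝ} {τ : ℝ} (hf : ContinuousOn f (s ∩ Iic τ))
    (hg : ContinuousOn g (s ∩ Ici τ)) (hfg : f τ = g τ) :
    ContinuousOn (fun t => if t ≤ τ then f t else g t) s := by
  refine ContinuousOn.if (fun t ht => ?_)
    (by rwa [show {t : ℝ | t ≤ τ} = Iic τ by ext; simp, closure_Iic])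
    (by rwa [show {t : ℝ | ¬t ≤ τ} = Ioi τ by ext; simp, closure_Ioi])
  have ht' : t ∈ frontier (Iic τ) := ht.2
  rw [frontier_Iic, mem_singleton_iff] at ht'
  rwa [ht']

theorem exists_pos_mul_exp_add_div_lt_one (A B : ℝ) {h : ℝ} (hh : 0 < h) :
    ∃ L > 0, A * Real.exp (-(L * h)) + B / L < 1 := by
  have hlim : Tendsto (fun L => A * Real.exp (-(L * h)) + B / L) atTop (𝓝 (A * 0 + 0)) :=
    ((Real.tendsto_exp_atBot.comp (tendsto_neg_atTop_atBot.comp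
      (tendsto_id.atTop_mul_const hh))).const_mul A).add (tendsto_const_nhds.div_atTop tendsto_id)
  rw [mul_zero, add_zero] at hlim
  obtain ⟨L, hL, hL0⟩ := ((hlim.eventually_lt_const one_pos).and (eventually_gt_atTop 0)).exists
  exact ⟨L, hL0, hL⟩

theorem mul_exp_add_integral_exp_le {A B L h d t : ℝ} (hB : 0 ≤ B) (hL : 0 < L) (hd : 0 ≤ d) :
    A * (d * Real.exp (L * (t - h))) + B * ∫ s in (0 : ℝ)..t, d * Real.exp (L * s) ≤
      (A * Real.exp (-(L * h)) + B / L) * d * Real.exp (L * t) := by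
  have hint : ∫ s in (0 : ℝ)..t, d * Real.exp (L * s) = d * (Real.exp (L * t) - 1) / L := by
    rw [intervalIntegral.integral_const_mul, intervalIntegral.integral_comp_mul_left _ hL.ne',
      integral_exp, mul_zero, Real.exp_zero, smul_eq_mul]
    field_simp
  rw [hint, show L * (t - h) = -(L * h) + L * t by ring, Real.exp_add,
    show B * (d * (Real.exp (L * t) - 1) / L) = B / L * d * Real.exp (L * t) - B * d / L by ring]
  have : 0 ≤ B * d / L := by positivity
  linarith

theorem exists_unique_eqOn_of_delay_volterra {T τ h A B : ℝ} (hτ : 0 ≤ τ) (hτT : τ ≤ T)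
    (hh : 0 < h) (hA : 0 ≤ A) (hB : 0 ≤ B) {x₀ : ℝ → ℝ} (hx₀ : ContinuousOn x₀ (Icc 0 T))
    {Ξ : (ℝ → ℝ) → ℝ → ℝ}
    (hΞcont : ∀ x, ContinuousOn x (Icc 0 T) → ContinuousOn (Ξ x) (Icc τ T))
    (hΞτ : Ξ x₀ τ = x₀ τ)
    (hΞlip : ∀ x y, ContinuousOn x (Icc 0 T) → ContinuousOn y (Icc 0 T) → ∀ t ∈ Icc τ T,
      ∀ ρ : ℝ → ℝ, Monotone ρ → (∀ s ∈ Icc 0 t, |x s - y s| ≤ ρ s) →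
      |Ξ x t - Ξ y t| ≤ A * ρ (t - h) + B * ∫ s in (0 : ℝ)..t, ρ s) :
    ∃ x, ContinuousOn x (Icc 0 T) ∧ EqOn x x₀ (Icc 0 τ) ∧ EqOn x (Ξ x) (Ioc τ T) ∧
      ∀ y, ContinuousOn y (Icc 0 T) → EqOn y x₀ (Icc 0 τ) → EqOn y (Ξ y) (Ioc τ T) →
        EqOn y x (Icc 0 T) := by
  obtain ⟨L, hL, hq⟩ := exists_pos_mul_exp_add_div_lt_one A B hh
  have hΞx₀ (x : ℝ → ℝ) (hx : ContinuousOn x (Icc 0 T)) (hxx₀ : EqOn x x₀ (Icc 0 τ)) :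
      Ξ x τ = x₀ τ := by
    -- the bound with `ρ = 0`: `Ξ x τ` only depends on `x` on `[0, τ]`
    have := hΞlip x x₀ hx hx₀ τ ⟨le_rfl, hτT⟩ 0 monotone_const (fun s hs => by simp [hxx₀ hs])
    simpa [sub_eq_zero, hΞτ] using this
  set Φ : (ℝ → ℝ) → ℝ → ℝ := fun x t => if t ≤ τ then x₀ t else Ξ x t
  have hΦcont (x : ℝ → ℝ) (hx : ContinuousOn x (Icc 0 T)) (hxx₀ : EqOn x x₀ (Icc 0 τ)) :
      ContinuousOn (Φ x) (Icc 0 T) :=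
    (hx₀.mono inter_subset_left).ite_le ((hΞcont x hx).mono fun t ht => ⟨ht.2, ht.1.2⟩)
      (hΞx₀ x hx hxx₀).symm
  have hΦlip (x y : ℝ → ℝ) (hx : ContinuousOn x (Icc 0 T)) (hy : ContinuousOn y (Icc 0 T))
      (d : ℝ) (hd : 0 ≤ d) (hxy : ∀ s ∈ Icc 0 T, |x s - y s| ≤ d * Real.exp (L * s))
      (t : ℝ) (ht : t ∈ Icc 0 T) :
      |Φ x t - Φ y t| ≤ (A * Real.exp (-(L * h)) + B / L) * d * Real.exp (L * t) := by
    simp only [Φ]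
    split_ifs with htτ
    · simp only [sub_self, abs_zero]
      positivity
    · refine (hΞlip x y hx hy t ⟨(not_le.1 htτ).le, ht.2⟩ (fun s => d * Real.exp (L * s))
        (fun s s' hss' => mul_le_mul_of_nonneg_left
          (Real.exp_le_exp.2 (mul_le_mul_of_nonneg_left hss' hL.le)) hd)
        fun s hs => hxy s ⟨hs.1, hs.2.trans ht.2⟩).trans ?_
      exact mul_exp_add_integral_exp_le hB hL hd
  obtain ⟨x, hx, hxx₀, hfix, huniq⟩ := exists_unique_eqOn_of_expWeighted_contraction hτ hτT
    (by positivity) hq hx₀ (fun x hx hxx₀ => ⟨hΦcont x hx hxx₀, fun t ht => if_pos ht.2⟩) hΦlip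
  refine ⟨x, hx, hxx₀, fun t ht => (hfix ⟨hτ.trans ht.1.le, ht.2⟩).trans
    (if_neg (not_le.2 ht.1)), fun y hy hyx₀ hyΞ => huniq y hy hyx₀ fun t ht => ?_⟩
  by_cases htτ : t ≤ τ
  · simp [Φ, htτ, hyx₀ ⟨ht.1, htτ⟩]
  · simp [Φ, htτ, hyΞ ⟨not_le.1 htτ, ht.2⟩]

theorem Finset.sum_Icc_sub_pred_eq {g : ℕ → ℕ → ℝ} {n : ℕ} (hn : 1 ≤ n) :
    ∑ i ∈ Finset.Icc 1 n, (g i i - g i (i - 1)) =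
      g n n - g 1 0 + ∑ i ∈ Finset.Icc 1 (n - 1), (g i i - g (i + 1) i) := by
  induction n, hn using Nat.le_induction with
  | base => simp
  | succ m hm ih =>
    obtain ⟨k, rfl⟩ : ∃ k, m = k + 1 := ⟨m - 1, by omega⟩
    rw [Finset.sum_Icc_succ_top (by omega), ih, Nat.add_sub_cancel, Nat.add_sub_cancel,
      Finset.sum_Icc_succ_top (by omega)]
    ring

theorem IsCompact.exists_forall_abs_le_of_continuousOn {X ι : Type*} [TopologicalSpace X]
    {S : Set X} (hS : IsCompact S) (s : Finset ι) {f : ι → X → ℝ}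
    (hf : ∀ i ∈ s, ContinuousOn (f i) S) : ∃ M, 0 ≤ M ∧ ∀ i ∈ s, ∀ x ∈ S, |f i x| ≤ M := by
  obtain ⟨M, hM⟩ := hS.exists_bound_of_continuousOn
    (continuousOn_finsetSum s fun i hi => (hf i hi).abs)
  refine ⟨max M 0, le_max_right _ _, fun i hi x hx => ?_⟩
  calc |f i x| ≤ ∑ j ∈ s, |f j x| := Finset.single_le_sum (fun j _ => abs_nonneg (f j x)) hi
    _ ≤ M := (le_abs_self _).trans (by simpa using hM x hx)
    _ ≤ max M 0 := le_max_left _ _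

theorem le_of_forall_lt_pred {α : ℕ → ℝ → ℝ} {n : ℕ} {T : ℝ} (hα0 : ∀ i ≤ n, α i 0 = 0)
    (hα : ∀ t ∈ Ioc 0 T, ∀ i, 1 ≤ i → i ≤ n → α (i - 1) t < α i t) :
    ∀ t ∈ Icc 0 T, ∀ i j, i ≤ j → j ≤ n → α i t ≤ α j t := by
  intro t ht i j hij hjn
  rcases ht.1.eq_or_lt with rfl | ht0
  · rw [hα0 i (hij.trans hjn), hα0 j hjn]
  induction j, hij using Nat.le_induction with
  | base => exact le_rfl
  | succ j _ ih => exact (ih (by omega)).trans (hα t ⟨ht0, ht.2⟩ (j + 1) (by omega) hjn).le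

theorem abs_integral_mul_sub_le {a b t M : ℝ} {k x y ρ : ℝ → ℝ} (ha : 0 ≤ a) (hab : a ≤ b)
    (hbt : b ≤ t) (hk : ContinuousOn k (Icc 0 t)) (hM : ∀ s ∈ Icc 0 t, |k s| ≤ M) (hM0 : 0 ≤ M)
    (hx : ContinuousOn x (Icc 0 t)) (hy : ContinuousOn y (Icc 0 t)) (hρ : Monotone ρ)
    (hxy : ∀ s ∈ Icc 0 t, |x s - y s| ≤ ρ s) :
    |(∫ s in a..b, k s * x s) - ∫ s in a..b, k s * y s| ≤ M * ∫ s in (0 : ℝ)..t, ρ s := by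
  have hsub : uIcc a b ⊆ Icc 0 t := uIcc_subset_Icc ⟨ha, hab.trans hbt⟩ ⟨ha.trans hab, hbt⟩
  have hint {z : ℝ → ℝ} (hz : ContinuousOn z (Icc 0 t)) :
      IntervalIntegrable (fun s => k s * z s) volume a b :=
    ((hk.mul hz).mono hsub).intervalIntegrable
  rw [← intervalIntegral.integral_sub (hint hx) (hint hy), ← intervalIntegral.integral_const_mul]
  calc |∫ s in a..b, (k s * x s - k s * y s)| ≤ ∫ s in a..b, M * ρ s := by
        rw [← Real.norm_eq_abs]
        refine intervalIntegral.norm_integral_le_of_norm_le hab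
          (Eventually.of_forall fun s hs => ?_) (hρ.intervalIntegrable.const_mul M)
        have hs' : s ∈ Icc 0 t := hsub (Icc_subset_uIcc (Ioc_subset_Icc_self hs))
        rw [Real.norm_eq_abs, ← mul_sub, abs_mul]
        exact mul_le_mul (hM s hs') (hxy s hs') (abs_nonneg _) hM0
    _ ≤ ∫ s in (0 : ℝ)..t, M * ρ s :=
        intervalIntegral.integral_mono_interval ha hab hbt
          ((ae_restrict_iff' measurableSet_Ioc).2 (Eventually.of_forall fun s hs =>
            mul_nonneg hM0 ((abs_nonneg _).trans (hxy s (Ioc_subset_Icc_self hs)))))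
          (hρ.intervalIntegrable.const_mul M)

section FirstKind

variable {n : ℕ} {T : ℝ} {α α' : ℕ → ℝ → ℝ} {K K' : ℕ → ℝ → ℝ → ℝ}

noncomputable def firstKindOp (n : ℕ) (α : ℕ → ℝ → ℝ) (K : ℕ → ℝ → ℝ → ℝ) (x : ℝ → ℝ) (t : ℝ) : ℝ :=
  ∑ i ∈ Finset.Icc 1 n, ∫ s in α (i - 1) t..α i t, K i t s * x s

/-- In this notation the quantity of the local theorem is
`D(t) = ∑_{i=1}^{n-1} |jumpCoeff α α' K i t / K n t t|`. -/
def jumpCoeff (α α' : ℕ → ℝ → ℝ) (K : ℕ → ℝ → ℝ → ℝ) (i : ℕ) (t : ℝ) : ℝ :=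
  α' i t * (K i t (α i t) - K (i + 1) t (α i t))

def delayTerm (n : ℕ) (α α' : ℕ → ℝ → ℝ) (K : ℕ → ℝ → ℝ → ℝ) (x : ℝ → ℝ) (t : ℝ) : ℝ :=
  ∑ i ∈ Finset.Icc 1 (n - 1), jumpCoeff α α' K i t * x (α i t)

/-- Differentiating the first-kind equation gives
`K n t t * x t + delayTerm n α α' K x t + firstKindOp n α K' x t = f' t`, i.e. the second-kind
equation `x = secondKindOp n α α' K K' f' x`. -/
noncomputable def secondKindOp (n : ℕ) (α α' : ℕ → ℝ → ℝ) (K K' : ℕ → ℝ → ℝ → ℝ)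
    (f' x : ℝ → ℝ) (t : ℝ) : ℝ :=
  (K n t t)⁻¹ * (f' t - delayTerm n α α' K x t - firstKindOp n α K' x t)

theorem firstKindOp_congr {K₁ K₂ : ℕ → ℝ → ℝ → ℝ} {x₁ x₂ : ℝ → ℝ} {t : ℝ}
    (hα : ∀ i ≤ n, α i t ∈ Icc 0 t)
    (h : ∀ i ∈ Finset.Icc 1 n, ∀ s ∈ Icc 0 t, K₁ i t s * x₁ s = K₂ i t s * x₂ s) :
    firstKindOp n α K₁ x₁ t = firstKindOp n α K₂ x₂ t := by
  refine Finset.sum_congr rfl fun i hi => intervalIntegral.integral_congr fun s hs => ?_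
  have hin := (Finset.mem_Icc.1 hi).2
  exact h i hi s (uIcc_subset_Icc (hα (i - 1) (by omega)) (hα i hin) hs)

theorem continuousOn_firstKindOp (hT : 0 ≤ T) {x : ℝ → ℝ}
    (hα : ∀ i ≤ n, ContinuousOn (α i) (Icc 0 T))
    (hαmem : ∀ i ≤ n, ∀ t ∈ Icc 0 T, α i t ∈ Icc 0 t)
    (hK : ∀ i ∈ Finset.Icc 1 n, ContinuousOn (uncurry (K i)) (Icc 0 T ×ˢ Icc 0 T))
    (hx : ContinuousOn x (Icc 0 T)) : ContinuousOn (firstKindOp n α K x) (Icc 0 T) := by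
  refine continuousOn_finsetSum _ fun i hi => continuousOn_integral_param_limits
    (G := fun t s => K i t s * x s) hT
    ((hK i hi).mul (hx.comp continuousOn_snd fun p hp => hp.2)) (hα _ (by simp at hi; omega))
    (hα _ (Finset.mem_Icc.1 hi).2) fun t ht => ⟨?_, ?_⟩
  · exact Icc_subset_Icc_right ht.2 (hαmem _ (by simp at hi; omega) t ht)
  · exact Icc_subset_Icc_right ht.2 (hαmem _ (Finset.mem_Icc.1 hi).2 t ht)

theorem eq_secondKindOp_iff {f' x : ℝ → ℝ} {t : ℝ} (hK : K n t t ≠ 0) :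
    x t = secondKindOp n α α' K K' f' x t ↔
      K n t t * x t + delayTerm n α α' K x t + firstKindOp n α K' x t = f' t := by
  rw [secondKindOp, eq_inv_mul_iff_mul_eq₀ hK]
  constructor <;> intro h <;> linarith

theorem abs_delayTerm_sub_le {x y ρ : ℝ → ℝ} {t δ C : ℝ} (hρ : Monotone ρ)
    (hα : ∀ i ∈ Finset.Icc 1 (n - 1), α i t ∈ Icc 0 t ∧ α i t ≤ δ)
    (hC : ∀ i ∈ Finset.Icc 1 (n - 1), |jumpCoeff α α' K i t| ≤ C)
    (hxy : ∀ s ∈ Icc 0 t, |x s - y s| ≤ ρ s) :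
    |delayTerm n α α' K x t - delayTerm n α α' K y t| ≤ (n - 1 : ℕ) * (C * ρ δ) := by
  rw [delayTerm, delayTerm, ← Finset.sum_sub_distrib]
  refine (Finset.abs_sum_le_sum_abs _ _).trans ?_
  refine (Finset.sum_le_card_nsmul _ _ (C * ρ δ) fun i hi => ?_).trans (by simp)
  rw [← mul_sub, abs_mul]
  exact mul_le_mul (hC i hi) ((hxy _ (hα i hi).1).trans (hρ (hα i hi).2)) (abs_nonneg _)
    ((abs_nonneg _).trans (hC i hi))

theorem abs_firstKindOp_sub_le {x y ρ : ℝ → ℝ} {t M : ℝ} (hα : ∀ i ≤ n, α i t ∈ Icc 0 t)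
    (hmono : ∀ i ∈ Finset.Icc 1 n, α (i - 1) t ≤ α i t)
    (hK : ∀ i ∈ Finset.Icc 1 n, ContinuousOn (K i t) (Icc 0 t))
    (hM : ∀ i ∈ Finset.Icc 1 n, ∀ s ∈ Icc 0 t, |K i t s| ≤ M) (hM0 : 0 ≤ M)
    (hx : ContinuousOn x (Icc 0 t)) (hy : ContinuousOn y (Icc 0 t)) (hρ : Monotone ρ)
    (hxy : ∀ s ∈ Icc 0 t, |x s - y s| ≤ ρ s) :
    |firstKindOp n α K x t - firstKindOp n α K y t| ≤ n * (M * ∫ s in (0 : ℝ)..t, ρ s) := by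
  rw [firstKindOp, firstKindOp, ← Finset.sum_sub_distrib]
  refine (Finset.abs_sum_le_sum_abs _ _).trans ?_
  refine (Finset.sum_le_card_nsmul _ _ (M * ∫ s in (0 : ℝ)..t, ρ s) fun i hi => ?_).trans
    (by simp)
  have hin := (Finset.mem_Icc.1 hi).2
  exact abs_integral_mul_sub_le (hα (i - 1) (by omega)).1 (hmono i hi) (hα i hin).2 (hK i hi)
    (hM i hi) hM0 hx hy hρ hxy

end FirstKind

structure IsSmoothJumpKernel (n : ℕ) (T : ℝ) (α α' : ℕ → ℝ → ℝ) (K K' : ℕ → ℝ → ℝ → ℝ) :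
    Prop where
  one_le : 1 ≤ n
  pos : 0 < T
  α_zero : ∀ t, α 0 t = 0
  α_last : ∀ t, α n t = t
  hasDerivAt_α : ∀ i ≤ n, ∀ t ∈ Icc 0 T, HasDerivAt (α i) (α' i t) t
  continuousOn_α' : ∀ i ≤ n, ContinuousOn (α' i) (Icc 0 T)
  α_mono : ∀ t ∈ Icc 0 T, ∀ i j, i ≤ j → j ≤ n → α i t ≤ α j t
  continuousOn_K : ∀ i ∈ Finset.Icc 1 n, ContinuousOn (uncurry (K i)) (Icc 0 T ×ˢ Icc 0 T)
  hasDerivAt_K : ∀ i ∈ Finset.Icc 1 n, ∀ s ∈ Icc 0 T, ∀ t ∈ Icc 0 T,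
    HasDerivAt (K i · s) (K' i t s) t
  continuousOn_K' : ∀ i ∈ Finset.Icc 1 n, ContinuousOn (uncurry (K' i)) (Icc 0 T ×ˢ Icc 0 T)
  K_diag_ne_zero : ∀ t ∈ Icc 0 T, K n t t ≠ 0

namespace IsSmoothJumpKernel

variable {n : ℕ} {T : ℝ} {α α' : ℕ → ℝ → ℝ} {K K' : ℕ → ℝ → ℝ → ℝ}

theorem α_mem (hV : IsSmoothJumpKernel n T α α' K K') {i : ℕ} (hi : i ≤ n) {t : ℝ}
    (ht : t ∈ Icc 0 T) : α i t ∈ Icc 0 t :=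
  ⟨by simpa [hV.α_zero] using hV.α_mono t ht 0 i (Nat.zero_le i) hi,
    by simpa [hV.α_last] using hV.α_mono t ht i n hi le_rfl⟩

theorem continuousOn_α (hV : IsSmoothJumpKernel n T α α' K K') {i : ℕ} (hi : i ≤ n) :
    ContinuousOn (α i) (Icc 0 T) :=
  fun t ht => (hV.hasDerivAt_α i hi t ht).continuousAt.continuousWithinAt

theorem α'_zero (hV : IsSmoothJumpKernel n T α α' K K') {t : ℝ} (ht : t ∈ Icc 0 T) : α' 0 t = 0 :=
  (hV.hasDerivAt_α 0 (Nat.zero_le n) t ht).unique <| by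
    simpa [funext hV.α_zero] using hasDerivAt_const t (0 : ℝ)

theorem α'_last (hV : IsSmoothJumpKernel n T α α' K K') {t : ℝ} (ht : t ∈ Icc 0 T) : α' n t = 1 :=
  (hV.hasDerivAt_α n le_rfl t ht).unique <| by
    simpa [funext hV.α_last] using hasDerivAt_id' t

theorem continuousOn_firstKindOp (hV : IsSmoothJumpKernel n T α α' K K') {x : ℝ → ℝ}
    (hx : ContinuousOn x (Icc 0 T)) :
    ContinuousOn (firstKindOp n α K x) (Icc 0 T) :=
  _root_.continuousOn_firstKindOp hV.pos.le (fun _ hi => hV.continuousOn_α hi)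
    (fun _ hi _ ht => hV.α_mem hi ht) hV.continuousOn_K hx

theorem continuousOn_comp_α (hV : IsSmoothJumpKernel n T α α' K K') {i : ℕ} (hi : i ≤ n)
    {F : ℝ → ℝ → ℝ} (hF : ContinuousOn (uncurry F) (Icc 0 T ×ˢ Icc 0 T)) :
    ContinuousOn (fun t => F t (α i t)) (Icc 0 T) :=
  hF.comp (continuousOn_id.prodMk (hV.continuousOn_α hi))
    fun _ ht => ⟨ht, (hV.α_mem hi ht).1, (hV.α_mem hi ht).2.trans ht.2⟩

theorem continuousOn_K_diag (hV : IsSmoothJumpKernel n T α α' K K') :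
    ContinuousOn (fun t => K n t t) (Icc 0 T) := by
  simpa [hV.α_last] using hV.continuousOn_comp_α le_rfl (hV.continuousOn_K n (by simp [hV.one_le]))

theorem continuousOn_jumpCoeff (hV : IsSmoothJumpKernel n T α α' K K') :
    ∀ i ∈ Finset.Icc 1 (n - 1), ContinuousOn (jumpCoeff α α' K i) (Icc 0 T) := by
  intro i hi
  have hin : i ≤ n := by simp at hi; omega
  exact (hV.continuousOn_α' i hin).mul
    ((hV.continuousOn_comp_α hin (hV.continuousOn_K i (by simp at hi ⊢; omega))).sub
      (hV.continuousOn_comp_α hin (hV.continuousOn_K (i + 1) (by simp at hi ⊢; omega))))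

theorem continuousOn_secondKindOp (hV : IsSmoothJumpKernel n T α α' K K') {f' x : ℝ → ℝ}
    (hf' : ContinuousOn f' (Icc 0 T)) (hx : ContinuousOn x (Icc 0 T)) :
    ContinuousOn (secondKindOp n α α' K K' f' x) (Icc 0 T) := by
  refine (hV.continuousOn_K_diag.inv₀ hV.K_diag_ne_zero).mul ((hf'.sub ?_).sub ?_)
  · refine continuousOn_finsetSum _ fun i hi => (hV.continuousOn_jumpCoeff i hi).mul ?_
    have hin : i ≤ n := by simp at hi; omega
    exact hx.comp (hV.continuousOn_α hin)
      fun t ht => ⟨(hV.α_mem hin ht).1, (hV.α_mem hin ht).2.trans ht.2⟩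
  · exact _root_.continuousOn_firstKindOp hV.pos.le (fun _ hi => hV.continuousOn_α hi)
      (fun _ hi _ ht => hV.α_mem hi ht) hV.continuousOn_K' hx

/-- The boundary terms of the Leibniz rule telescope, up to the jumps of the kernel. -/
theorem sum_boundary_terms_eq (hV : IsSmoothJumpKernel n T α α' K K') {t : ℝ} (ht : t ∈ Icc 0 T)
    (x : ℝ → ℝ) :
    ∑ i ∈ Finset.Icc 1 n, (α' i t * (K i t (α i t) * x (α i t)) -
      α' (i - 1) t * (K i t (α (i - 1) t) * x (α (i - 1) t))) =
    K n t t * x t + delayTerm n α α' K x t := by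
  rw [Finset.sum_Icc_sub_pred_eq (g := fun i j => α' j t * (K i t (α j t) * x (α j t))) hV.one_le,
    hV.α'_zero ht, hV.α'_last ht, hV.α_last, delayTerm]
  rw [one_mul, zero_mul, sub_zero]
  exact congrArg _ (Finset.sum_congr rfl fun i _ => by simp only [jumpCoeff]; ring)

theorem hasDerivAt_firstKindOp (hV : IsSmoothJumpKernel n T α α' K K') {x : ℝ → ℝ}
    (hx : ContinuousOn x (Icc 0 T)) {t : ℝ} (ht : t ∈ Ioo 0 T) :
    HasDerivAt (firstKindOp n α K x)
      (K n t t * x t + delayTerm n α α' K x t + firstKindOp n α K' x t) t := by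
  have ht' := Ioo_subset_Icc_self ht
  have hxK {F : ℕ → ℝ → ℝ → ℝ} {i : ℕ} (hF : ContinuousOn (uncurry (F i)) (Icc 0 T ×ˢ Icc 0 T)) :
      ContinuousOn (uncurry fun t s => F i t s * x s) (Icc 0 T ×ˢ Icc 0 T) :=
    hF.mul (hx.comp continuousOn_snd fun p hp => hp.2)
  have hmem {j : ℕ} (hj : j ≤ n) {u : ℝ} (hu : u ∈ Icc 0 T) : α j u ∈ Icc 0 T :=
    Icc_subset_Icc_right hu.2 (hV.α_mem hj hu)
  refine (HasDerivAt.fun_sum fun i hi => hasDerivAt_integral_param_limits_of_continuousOn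
    (hxK (hV.continuousOn_K i hi)) (hxK (hV.continuousOn_K' i hi))
    (fun s hs u hu => (hV.hasDerivAt_K i hi s hs u hu).mul_const (x s))
    (fun u hu => ⟨hmem (by simp at hi; omega) hu, hmem (Finset.mem_Icc.1 hi).2 hu⟩) ht
    (hV.hasDerivAt_α (i - 1) (by simp at hi; omega) t ht')
    (hV.hasDerivAt_α i (Finset.mem_Icc.1 hi).2 t ht')).congr_deriv ?_
  rw [Finset.sum_congr rfl fun i _ => add_sub_assoc _ _ _, Finset.sum_add_distrib,
    hV.sum_boundary_terms_eq ht' x, firstKindOp, add_comm]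

theorem eqOn_secondKindOp_of_eqOn_firstKindOp (hV : IsSmoothJumpKernel n T α α' K K')
    {f f' x : ℝ → ℝ} (hf : ∀ t ∈ Icc 0 T, HasDerivAt f (f' t) t)
    (hf' : ContinuousOn f' (Icc 0 T)) (hx : ContinuousOn x (Icc 0 T)) {b : ℝ} (hb : 0 < b)
    (hbT : b ≤ T) (hsol : EqOn (firstKindOp n α K x) f (Icc 0 b)) :
    EqOn x (secondKindOp n α α' K K' f' x) (Icc 0 b) := by
  have hsub : Icc 0 b ⊆ Icc 0 T := Icc_subset_Icc_right hbT
  refine EqOn.of_subset_closure (s := Ioo 0 b) (fun t ht => ?_) (hx.mono hsub)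
    ((hV.continuousOn_secondKindOp hf' hx).mono hsub) Ioo_subset_Icc_self
    (by rw [closure_Ioo hb.ne])
  have htT : t ∈ Icc 0 T := hsub (Ioo_subset_Icc_self ht)
  rw [eq_secondKindOp_iff (hV.K_diag_ne_zero t htT)]
  exact (hV.hasDerivAt_firstKindOp hx ⟨ht.1, ht.2.trans_le hbT⟩).unique
    ((hf t htT).congr_of_eventuallyEq (eventuallyEq_of_mem (Ioo_mem_nhds ht.1 ht.2)
      fun u hu => hsol (Ioo_subset_Icc_self hu)))

theorem eqOn_firstKindOp_of_eqOn_secondKindOp (hV : IsSmoothJumpKernel n T α α' K K')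
    {f f' x : ℝ → ℝ} (hf : ∀ t ∈ Icc 0 T, HasDerivAt f (f' t) t)
    (hx : ContinuousOn x (Icc 0 T)) {a : ℝ} (ha : 0 ≤ a)
    (hxΞ : EqOn x (secondKindOp n α α' K K' f' x) (Ioo a T))
    (hfa : firstKindOp n α K x a = f a) : EqOn (firstKindOp n α K x) f (Icc a T) := by
  intro t ht
  rcases ht.1.eq_or_lt with rfl | hat
  · exact hfa
  -- `firstKindOp n α K x - f` has derivative `0` on `(a, t)`
  obtain ⟨c, hc, hslope⟩ := exists_hasDerivAt_eq_slope (fun u => firstKindOp n α K x u - f u)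
    (fun _ => 0) hat
    ((hV.continuousOn_firstKindOp hx).sub (fun u hu => (hf u hu).continuousAt.continuousWithinAt)
      |>.mono (Icc_subset_Icc ha ht.2))
    fun c hc => by
      have hcT : c ∈ Ioo 0 T := ⟨ha.trans_lt hc.1, hc.2.trans_le ht.2⟩
      have := (hV.hasDerivAt_firstKindOp hx hcT).sub (hf c (Ioo_subset_Icc_self hcT))
      rwa [(eq_secondKindOp_iff (hV.K_diag_ne_zero c (Ioo_subset_Icc_self hcT))).1
        (hxΞ ⟨hc.1, hcT.2⟩), sub_self] at this
  rw [eq_comm, div_eq_zero_iff, sub_eq_zero, hfa, sub_self] at hslope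
  exact sub_eq_zero.1 (hslope.resolve_right (sub_ne_zero.2 hat.ne'))

theorem exists_abs_secondKindOp_sub_le (hV : IsSmoothJumpKernel n T α α' K K') :
    ∃ A B, 0 ≤ A ∧ 0 ≤ B ∧ ∀ f' x y : ℝ → ℝ, ContinuousOn x (Icc 0 T) →
      ContinuousOn y (Icc 0 T) → ∀ t ∈ Icc 0 T, ∀ δ, α (n - 1) t ≤ δ → ∀ ρ : ℝ → ℝ,
      Monotone ρ → (∀ s ∈ Icc 0 t, |x s - y s| ≤ ρ s) →
      |secondKindOp n α α' K K' f' x t - secondKindOp n α α' K K' f' y t| ≤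
        A * ρ δ + B * ∫ s in (0 : ℝ)..t, ρ s := by
  obtain ⟨Kinv, hKinv0, hKinv⟩ := isCompact_Icc.exists_forall_abs_le_of_continuousOn {n}
    (f := fun _ t => (K n t t)⁻¹) fun _ _ => hV.continuousOn_K_diag.inv₀ hV.K_diag_ne_zero
  obtain ⟨C, hC0, hC⟩ := isCompact_Icc.exists_forall_abs_le_of_continuousOn _
    hV.continuousOn_jumpCoeff
  obtain ⟨M, hM0, hM⟩ := (isCompact_Icc.prod isCompact_Icc).exists_forall_abs_le_of_continuousOn
    _ hV.continuousOn_K'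
  refine ⟨Kinv * ((n - 1 : ℕ) * C), Kinv * (n * M), by positivity, by positivity,
    fun f' x y hx hy t ht δ hδ ρ hρ hxy => ?_⟩
  have hsub : Icc 0 t ⊆ Icc 0 T := Icc_subset_Icc_right ht.2
  have hdelay := abs_delayTerm_sub_le (n := n) (α' := α') (K := K) hρ
    (fun i hi => ⟨hV.α_mem (by simp at hi; omega) ht,
      (hV.α_mono t ht i (n - 1) (by simp at hi; omega) (Nat.sub_le n 1)).trans hδ⟩)
    (fun i hi => hC i hi t ht) hxy
  have hint := abs_firstKindOp_sub_le (n := n) (K := K') (fun i hi => hV.α_mem hi ht)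
    (fun i hi => hV.α_mono t ht (i - 1) i (Nat.sub_le i 1) (Finset.mem_Icc.1 hi).2)
    (fun i hi => (hV.continuousOn_K' i hi).comp (Continuous.prodMk_right t).continuousOn
      fun s hs => ⟨ht, hsub hs⟩)
    (fun i hi s hs => hM i hi (t, s) ⟨ht, hsub hs⟩) hM0 (hx.mono hsub) (hy.mono hsub) hρ hxy
  calc |secondKindOp n α α' K K' f' x t - secondKindOp n α α' K K' f' y t|
      = |(K n t t)⁻¹| * |(delayTerm n α α' K y t - delayTerm n α α' K x t) +
          (firstKindOp n α K' y t - firstKindOp n α K' x t)| := by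
        rw [← abs_mul, secondKindOp, secondKindOp]
        ring_nf
    _ ≤ Kinv * (|delayTerm n α α' K x t - delayTerm n α α' K y t| +
          |firstKindOp n α K' x t - firstKindOp n α K' y t|) := by
        refine mul_le_mul (hKinv n (Finset.mem_singleton_self n) t ht) ?_ (abs_nonneg _) hKinv0
        rw [abs_sub_comm (delayTerm _ _ _ _ x t), abs_sub_comm (firstKindOp _ _ _ x t)]
        exact abs_add_le _ _
    _ ≤ Kinv * ((n - 1 : ℕ) * (C * ρ δ) + n * (M * ∫ s in (0 : ℝ)..t, ρ s)) := by gcongr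
    _ = _ := by ring

theorem eqOn_firstKindOp_iff (hV : IsSmoothJumpKernel n T α α' K K') {f f' : ℝ → ℝ}
    (hf : ∀ t ∈ Icc 0 T, HasDerivAt f (f' t) t) (hf' : ContinuousOn f' (Icc 0 T)) {τ : ℝ}
    (hτ : 0 < τ) (hτT : τ ≤ T) {x₀ : ℝ → ℝ} (hx₀ : EqOn (firstKindOp n α K x₀) f (Icc 0 τ))
    (huniq : ∀ y, ContinuousOn y (Icc 0 τ) → EqOn (firstKindOp n α K y) f (Icc 0 τ) →
      EqOn y x₀ (Icc 0 τ))
    {y : ℝ → ℝ} (hy : ContinuousOn y (Icc 0 T)) :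
    EqOn (firstKindOp n α K y) f (Icc 0 T) ↔
      EqOn y x₀ (Icc 0 τ) ∧ EqOn y (secondKindOp n α α' K K' f' y) (Ioc τ T) := by
  have hτT' : Icc 0 τ ⊆ Icc 0 T := Icc_subset_Icc_right hτT
  refine ⟨fun hsol => ⟨huniq y (hy.mono hτT') (hsol.mono hτT'),
    (hV.eqOn_secondKindOp_of_eqOn_firstKindOp hf hf' hy hV.pos le_rfl hsol).mono
      (Ioc_subset_Icc_self.trans (Icc_subset_Icc_left hτ.le))⟩, fun h => ?_⟩
  obtain ⟨hyx₀, hyΞ⟩ := h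
  have hsolτ : EqOn (firstKindOp n α K y) f (Icc 0 τ) := fun t ht =>
    (firstKindOp_congr (fun i hi => hV.α_mem hi (hτT' ht)) fun i _ s hs => by
      rw [hyx₀ ⟨hs.1, hs.2.trans ht.2⟩]).trans (hx₀ ht)
  have hsolT := hV.eqOn_firstKindOp_of_eqOn_secondKindOp hf hy hτ.le
    (hyΞ.mono Ioo_subset_Ioc_self) (hsolτ ⟨hτ.le, le_rfl⟩)
  intro t ht
  rcases le_total t τ with htτ | htτ
  exacts [hsolτ ⟨ht.1, htτ⟩, hsolT ⟨htτ, ht.2⟩]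

end IsSmoothJumpKernel

theorem global_existence_uniqueness_weakly_regular_VIE_general
    (n : ℕ) (hn : 1 ≤ n) (T : ℝ) (hT : 0 < T)
    (α α' : ℕ → ℝ → ℝ) (K K' : ℕ → ℝ → ℝ → ℝ) (f f' : ℝ → ℝ)
    (hα0 : ∀ t, α 0 t = 0)
    (hαn : ∀ t, α n t = t)
    (hαderiv : ∀ i, i ≤ n → ∀ t ∈ Icc (0:ℝ) T, HasDerivAt (α i) (α' i t) t)
    (hα'cont : ∀ i, i ≤ n → ContinuousOn (α' i) (Icc 0 T))
    (hαinit : ∀ i, i ≤ n → α i 0 = 0)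
    (hαchain : ∀ t ∈ Ioc (0:ℝ) T, ∀ i, 1 ≤ i → i ≤ n → α (i - 1) t < α i t)
    (hKcont : ∀ i, 1 ≤ i → i ≤ n →
      ContinuousOn (fun p : ℝ × ℝ => K i p.1 p.2) (Icc 0 T ×ˢ Icc 0 T))
    (hKderiv : ∀ i, 1 ≤ i → i ≤ n → ∀ s ∈ Icc (0:ℝ) T, ∀ t ∈ Icc (0:ℝ) T,
      HasDerivAt (fun u => K i u s) (K' i t s) t)
    (hK'cont : ∀ i, 1 ≤ i → i ≤ n →
      ContinuousOn (fun p : ℝ × ℝ => K' i p.1 p.2) (Icc 0 T ×ˢ Icc 0 T))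
    (hfderiv : ∀ t ∈ Icc (0:ℝ) T, HasDerivAt f (f' t) t)
    (hf'cont : ContinuousOn f' (Icc 0 T))
    (hKn : ∀ t ∈ Icc (0:ℝ) T, K n t t ≠ 0)
    -- `τ` is as in the local existence theorem: on `[0,τ]` there is exactly one
    -- continuous solution
    (τ : ℝ) (hτ : τ ∈ Ioc (0:ℝ) T)
    (hτloc : ∃ x : ℝ → ℝ,
      (ContinuousOn x (Icc 0 τ) ∧
        ∀ t ∈ Icc (0:ℝ) τ,
          ∑ i ∈ Finset.Icc 1 n, ∫ s in α (i - 1) t..α i t, K i t s * x s = f t) ∧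
      ∀ y : ℝ → ℝ,
        (ContinuousOn y (Icc 0 τ) ∧
          ∀ t ∈ Icc (0:ℝ) τ,
            ∑ i ∈ Finset.Icc 1 n, ∫ s in α (i - 1) t..α i t, K i t s * y s = f t) →
        ∀ t ∈ Icc (0:ℝ) τ, y t = x t)
    -- `min_{τ ≤ t ≤ T} (t - α_{n-1}(t)) = h > 0`
    (h : ℝ) (hh : 0 < h)
    (hmin : IsLeast ((fun t => t - α (n - 1) t) '' Icc τ T) h) :
    ∃ x : ℝ → ℝ,
      (ContinuousOn x (Icc 0 T) ∧
        ∀ t ∈ Icc (0:ℝ) T,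
          ∑ i ∈ Finset.Icc 1 n, ∫ s in α (i - 1) t..α i t, K i t s * x s = f t) ∧
      ∀ y : ℝ → ℝ,
        (ContinuousOn y (Icc 0 T) ∧
          ∀ t ∈ Icc (0:ℝ) T,
            ∑ i ∈ Finset.Icc 1 n, ∫ s in α (i - 1) t..α i t, K i t s * y s = f t) →
        ∀ t ∈ Icc (0:ℝ) T, y t = x t := by
  obtain ⟨hτ0, hτT⟩ := hτ
  have hV : IsSmoothJumpKernel n T α α' K K' :=
    { one_le := hn, pos := hT, α_zero := hα0, α_last := hαn, hasDerivAt_α := hαderiv,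
      continuousOn_α' := hα'cont, α_mono := le_of_forall_lt_pred hαinit hαchain,
      continuousOn_K := fun i hi => hKcont i (Finset.mem_Icc.1 hi).1 (Finset.mem_Icc.1 hi).2,
      hasDerivAt_K := fun i hi => hKderiv i (Finset.mem_Icc.1 hi).1 (Finset.mem_Icc.1 hi).2,
      continuousOn_K' := fun i hi => hK'cont i (Finset.mem_Icc.1 hi).1 (Finset.mem_Icc.1 hi).2,
      K_diag_ne_zero := hKn }
  obtain ⟨x₀, ⟨hx₀c, hx₀⟩, hx₀uniq⟩ := hτloc
  set x₁ : ℝ → ℝ := fun t => x₀ (projIcc 0 τ hτ0.le t)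
  have hx₁ : EqOn x₁ x₀ (Icc 0 τ) := fun t ht => by simp [x₁, projIcc_of_mem _ ht]
  have hx₁sol : EqOn (firstKindOp n α K x₁) f (Icc 0 τ) := fun t ht =>
    (firstKindOp_congr (fun i hi => hV.α_mem hi ⟨ht.1, ht.2.trans hτT⟩) fun i _ s hs => by
      rw [hx₁ ⟨hs.1, hs.2.trans ht.2⟩]).trans (hx₀ t ht)
  have hx₁c : ContinuousOn x₁ (Icc 0 T) := (continuous_comp_projIcc hτ0.le hx₀c).continuousOn
  have hchar {y : ℝ → ℝ} (hy : ContinuousOn y (Icc 0 T)) :=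
    hV.eqOn_firstKindOp_iff hfderiv hf'cont hτ0 hτT hx₁sol (fun y hyc hy t ht =>
      (hx₀uniq y ⟨hyc, fun t ht => hy ht⟩ t ht).trans (hx₁ ht).symm) hy
  obtain ⟨A, B, hA, hB, hlip⟩ := hV.exists_abs_secondKindOp_sub_le
  obtain ⟨X, hXc, hX₁, hXΞ, hXuniq⟩ := exists_unique_eqOn_of_delay_volterra hτ0.le hτT hh hA hB
    hx₁c
    (fun x hx => (hV.continuousOn_secondKindOp hf'cont hx).mono (Icc_subset_Icc_left hτ0.le))
    (hV.eqOn_secondKindOp_of_eqOn_firstKindOp hfderiv hf'cont hx₁c hτ0 hτT hx₁sol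
      ⟨hτ0.le, le_rfl⟩).symm
    fun x y hx hy t ht => hlip f' x y hx hy t ⟨hτ0.le.trans ht.1, ht.2⟩ (t - h) <| by
      linarith [hmin.2 (mem_image_of_mem _ ht)]
  refine ⟨X, ⟨hXc, fun t ht => (hchar hXc).2 ⟨hX₁, hXΞ⟩ ht⟩, fun y hy t ht => ?_⟩
  obtain ⟨hy₁, hyΞ⟩ := (hchar hy.1).1 fun t ht => hy.2 t ht
  exact hXuniq y hy.1 hy₁ hyΞ ht

/-- **Theorem 1 (global part): global existence and uniqueness** for the weakly regular
Volterra integral equation of the first kind. Under the hypotheses of the local theorem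
(`D(0) < 1`), with `τ ∈ (0,T]` as given by the local theorem, if moreover
`min_{τ ≤ t ≤ T} (t - α_{n-1}(t)) = h > 0`, then the equation
`∑_{i=1}^{n} ∫_{α_{i-1}(t)}^{α_i(t)} K_i(t,s) x(s) ds = f(t)` has exactly one
continuous solution on `[0,T]`. -/
theorem global_existence_uniqueness_weakly_regular_VIE
    (n : ℕ) (hn : 1 ≤ n) (T : ℝ) (hT : 0 < T)
    (α α' : ℕ → ℝ → ℝ) (K K' : ℕ → ℝ → ℝ → ℝ) (f f' : ℝ → ℝ)
    (hα0 : ∀ t, α 0 t = 0)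
    (hαn : ∀ t, α n t = t)
    (hαderiv : ∀ i, i ≤ n → ∀ t ∈ Icc (0:ℝ) T, HasDerivAt (α i) (α' i t) t)
    (hα'cont : ∀ i, i ≤ n → ContinuousOn (α' i) (Icc 0 T))
    (hαinit : ∀ i, i ≤ n → α i 0 = 0)
    (hαchain : ∀ t ∈ Ioc (0:ℝ) T, ∀ i, 1 ≤ i → i ≤ n → α (i - 1) t < α i t)
    (hKcont : ∀ i, 1 ≤ i → i ≤ n →
      ContinuousOn (fun p : ℝ × ℝ => K i p.1 p.2) (Icc 0 T ×ˢ Icc 0 T))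
    (hKderiv : ∀ i, 1 ≤ i → i ≤ n → ∀ s ∈ Icc (0:ℝ) T, ∀ t ∈ Icc (0:ℝ) T,
      HasDerivAt (fun u => K i u s) (K' i t s) t)
    (hK'cont : ∀ i, 1 ≤ i → i ≤ n →
      ContinuousOn (fun p : ℝ × ℝ => K' i p.1 p.2) (Icc 0 T ×ˢ Icc 0 T))
    (hfderiv : ∀ t ∈ Icc (0:ℝ) T, HasDerivAt f (f' t) t)
    (hf'cont : ContinuousOn f' (Icc 0 T))
    (hf0 : f 0 = 0)
    (hKn : ∀ t ∈ Icc (0:ℝ) T, K n t t ≠ 0)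
    -- `D(0) < 1`
    (hD : ∑ i ∈ Finset.Icc 1 (n - 1),
        |α' i 0 * (K n 0 0)⁻¹| * |K i 0 (α i 0) - K (i + 1) 0 (α i 0)| < 1)
    -- `τ` is as in the local existence theorem: on `[0,τ]` there is exactly one
    -- continuous solution
    (τ : ℝ) (hτ : τ ∈ Ioc (0:ℝ) T)
    (hτloc : ∃ x : ℝ → ℝ,
      (ContinuousOn x (Icc 0 τ) ∧
        ∀ t ∈ Icc (0:ℝ) τ,
          ∑ i ∈ Finset.Icc 1 n, ∫ s in α (i - 1) t..α i t, K i t s * x s = f t) ∧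
      ∀ y : ℝ → ℝ,
        (ContinuousOn y (Icc 0 τ) ∧
          ∀ t ∈ Icc (0:ℝ) τ,
            ∑ i ∈ Finset.Icc 1 n, ∫ s in α (i - 1) t..α i t, K i t s * y s = f t) →
        ∀ t ∈ Icc (0:ℝ) τ, y t = x t)
    -- `min_{τ ≤ t ≤ T} (t - α_{n-1}(t)) = h > 0`
    (h : ℝ) (hh : 0 < h)
    (hmin : IsLeast ((fun t => t - α (n - 1) t) '' Icc τ T) h) :
    ∃ x : ℝ → ℝ,
      (ContinuousOn x (Icc 0 T) ∧
        ∀ t ∈ Icc (0:ℝ) T,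
          ∑ i ∈ Finset.Icc 1 n, ∫ s in α (i - 1) t..α i t, K i t s * x s = f t) ∧
      ∀ y : ℝ → ℝ,
        (ContinuousOn y (Icc 0 T) ∧
          ∀ t ∈ Icc (0:ℝ) T,
            ∑ i ∈ Finset.Icc 1 n, ∫ s in α (i - 1) t..α i t, K i t s * y s = f t) →
        ∀ t ∈ Icc (0:ℝ) T, y t = x t :=
  global_existence_uniqueness_weakly_regular_VIE_general n hn T hT α α' K K' f f' hα0 hαn hαderiv
    hα'cont hαinit hαchain hKcont hKderiv hK'cont hfderiv hf'cont hKn τ hτ hτloc h hh hmin
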